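/- arXiv:1704.07209 — 6 statements merged into one kernel-verified Lean document; each statement's English description precedes it below -/
import Mathlib

section
/- Let g : ℝ → ℝ be C¹, let u : ℝ × ℝ → ℝ be C² and m : ℝ × ℝ → ℝ be C¹, and suppose that for all (x,t), ∂_t u + ∂_x u = g(m) and ∂_t m − ∂_x m = 0. Then u satisfies the linear wave equation ∂_{tt} u(x,t) − ∂_{xx} u(x,t) = 0 for all (x,t). -/
/-!
Since `u` is C², its Hessian is symmetric, so the wave operator factors as
`∂_tt u - ∂_xx u = (∂_t - ∂_x)(∂_t + ∂_x) u = (∂_t - ∂_x)(g ∘ m)`.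
The transport equation makes `m`, hence `g ∘ m`, constant along the characteristics
`s ↦ (x - s, t + s)`, so this last derivative vanishes.
-/

section PartialDerivatives

variable {𝕜 E F : Type*} [NontriviallyNormedField 𝕜] [NormedAddCommGroup E] [NormedSpace 𝕜 E]
  [NormedAddCommGroup F] [NormedSpace 𝕜 F]

theorem DifferentiableAt.deriv_partial_fst {f : 𝕜 × E → F} {x : 𝕜} {y : E}
    (hf : DifferentiableAt 𝕜 f (x, y)) :
    deriv (fun x' => f (x', y)) x = fderiv 𝕜 f (x, y) (1, 0) :=
  (hf.hasFDerivAt.comp_hasDerivAt x ((hasDerivAt_id x).prodMk (hasDerivAt_const x y))).deriv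

theorem DifferentiableAt.deriv_partial_snd {f : E × 𝕜 → F} {x : E} {y : 𝕜}
    (hf : DifferentiableAt 𝕜 f (x, y)) :
    deriv (fun y' => f (x, y')) y = fderiv 𝕜 f (x, y) (0, 1) :=
  (hf.hasFDerivAt.comp_hasDerivAt y ((hasDerivAt_const y x).prodMk (hasDerivAt_id y))).deriv

theorem fderiv_fderiv_apply_const {f : E → F} {p : E}
    (hf : DifferentiableAt 𝕜 (fderiv 𝕜 f) p) (v w : E) :
    fderiv 𝕜 (fun q => fderiv 𝕜 f q v) p w = fderiv 𝕜 (fderiv 𝕜 f) p w v := by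
  simp [fderiv_clm_apply hf (differentiableAt_const v)]

theorem deriv_deriv_partial_fst {f : 𝕜 × E → F} (hf : Differentiable 𝕜 f)
    {x : 𝕜} {y : E} (hdf : DifferentiableAt 𝕜 (fderiv 𝕜 f) (x, y)) :
    deriv (fun a : 𝕜 => deriv (fun b : 𝕜 => f (b, y)) a) x =
      fderiv 𝕜 (fderiv 𝕜 f) (x, y) (1, 0) (1, 0) := by
  simp only [fun x' => (hf (x', y)).deriv_partial_fst]
  rw [(hdf.clm_apply (differentiableAt_const _)).deriv_partial_fst, fderiv_fderiv_apply_const hdf]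

theorem deriv_deriv_partial_snd {f : E × 𝕜 → F} (hf : Differentiable 𝕜 f)
    {x : E} {y : 𝕜} (hdf : DifferentiableAt 𝕜 (fderiv 𝕜 f) (x, y)) :
    deriv (fun a : 𝕜 => deriv (fun b : 𝕜 => f (x, b)) a) y =
      fderiv 𝕜 (fderiv 𝕜 f) (x, y) (0, 1) (0, 1) := by
  simp only [fun y' => (hf (x, y')).deriv_partial_snd]
  rw [(hdf.clm_apply (differentiableAt_const _)).deriv_partial_snd, fderiv_fderiv_apply_const hdf]

theorem DifferentiableAt.fderiv_apply_eq_zero_of_add_smul_eq {f : E → F} {p d : E}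
    (hf : DifferentiableAt 𝕜 f p) (h : ∀ s : 𝕜, f (p + s • d) = f p) :
    fderiv 𝕜 f p d = 0 := by
  simp [← hf.lineDeriv_eq_fderiv, lineDeriv, h]

theorem ContinuousLinearMap.apply_self_sub_apply_self (B : E →L[𝕜] E →L[𝕜] F) {v w : E}
    (hB : B v w = B w v) : B v v - B w w = B (v - w) (v + w) := by
  simp only [map_sub, map_add, sub_apply, hB]
  abel

end PartialDerivatives

theorem Differentiable.apply_add_smul_eq_of_fderiv_apply_eq_zero {𝕜 E F : Type*} [RCLike 𝕜]
    [NormedAddCommGroup E] [NormedSpace 𝕜 E] [NormedAddCommGroup F] [NormedSpace 𝕜 F]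
    {f : E → F} (hf : Differentiable 𝕜 f) {d : E} (hd : ∀ p, fderiv 𝕜 f p d = 0) (p : E) (s : 𝕜) :
    f (p + s • d) = f p := by
  have hline : ∀ s : 𝕜, HasDerivAt (fun s : 𝕜 => f (p + s • d)) 0 s := fun s => by
    simpa [Function.comp_def, hd] using
      (hf _).hasFDerivAt.comp_hasDerivAt s (((hasDerivAt_id s).smul_const d).const_add p)
  simpa using is_const_of_deriv_eq_zero (fun s => (hline s).differentiableAt)
    (fun s => (hline s).deriv) s 0

theorem forward_forward_linear_wave_equation_general
    (g : ℝ → ℝ) (u m : ℝ → ℝ → ℝ)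
    (hu : ContDiff ℝ 2 (fun p : ℝ × ℝ => u p.1 p.2))
    (hm : ContDiff ℝ 1 (fun p : ℝ × ℝ => m p.1 p.2))
    (heq1 : ∀ x t : ℝ,
      deriv (fun s => u x s) t + deriv (fun y => u y t) x = g (m x t))
    (heq2 : ∀ x t : ℝ,
      deriv (fun s => m x s) t - deriv (fun y => m y t) x = 0) :
    ∀ x t : ℝ,
      deriv (fun s => deriv (fun r => u x r) s) t -
        deriv (fun y => deriv (fun z => u z t) y) x = 0 := by
  intro x t
  set f : ℝ × ℝ → ℝ := fun p => u p.1 p.2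
  set M : ℝ × ℝ → ℝ := fun p => m p.1 p.2
  have hf : Differentiable ℝ f := hu.differentiable two_ne_zero
  have hdf : Differentiable ℝ (fderiv ℝ f) := (hu.fderiv_right le_rfl).differentiable one_ne_zero
  have hM : Differentiable ℝ M := hm.differentiable one_ne_zero
  set v : ℝ × ℝ := (0, 1)
  set w : ℝ × ℝ := (1, 0)
  have hm_char : ∀ p, fderiv ℝ M p (v - w) = 0 := fun (a, b) => by
    have h : deriv (fun s => M (a, s)) b - deriv (fun y => M (y, b)) a = 0 := heq2 a b
    rwa [(hM _).deriv_partial_snd, (hM _).deriv_partial_fst, ← map_sub] at h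
  have hu_transport : ∀ p, fderiv ℝ f p (v + w) = g (M p) := fun (a, b) => by
    have h : deriv (fun s => f (a, s)) b + deriv (fun y => f (y, b)) a = g (M (a, b)) := heq1 a b
    rwa [(hf _).deriv_partial_snd, (hf _).deriv_partial_fst, ← map_add] at h
  have hwave : fderiv ℝ (fderiv ℝ f) (x, t) (v - w) (v + w) = 0 := by
    rw [← fderiv_fderiv_apply_const (hdf _)]
    refine ((hdf _).clm_apply (differentiableAt_const _)).fderiv_apply_eq_zero_of_add_smul_eq
      fun s => ?_
    simp only [hu_transport, hM.apply_add_smul_eq_of_fderiv_apply_eq_zero hm_char]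
  rw [deriv_deriv_partial_snd hf (hdf _), deriv_deriv_partial_fst hf (hdf _),
    ContinuousLinearMap.apply_self_sub_apply_self _ (hu.contDiffAt.isSymmSndFDerivAt (by simp) _ _),
    hwave]

/-- If `u` (C²) and `m` (C¹) solve the forward-forward MFG system with
linear Hamiltonian, `∂_t u + ∂_x u = g(m)` and `∂_t m − ∂_x m = 0` with `g` of class C¹,
then `u` satisfies the linear wave equation `∂_tt u − ∂_xx u = 0`. -/
theorem forward_forward_linear_wave_equation
    (g : ℝ → ℝ) (u m : ℝ → ℝ → ℝ)
    (hg : ContDiff ℝ 1 g)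
    (hu : ContDiff ℝ 2 (fun p : ℝ × ℝ => u p.1 p.2))
    (hm : ContDiff ℝ 1 (fun p : ℝ × ℝ => m p.1 p.2))
    (heq1 : ∀ x t : ℝ,
      deriv (fun s => u x s) t + deriv (fun y => u y t) x = g (m x t))
    (heq2 : ∀ x t : ℝ,
      deriv (fun s => m x s) t - deriv (fun y => m y t) x = 0) :
    ∀ x t : ℝ,
      deriv (fun s => deriv (fun r => u x r) s) t -
        deriv (fun y => deriv (fun z => u z t) y) x = 0 :=
  forward_forward_linear_wave_equation_general g u m hu hm heq1 heq2
end

section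
/- Let u : ℝ × ℝ → ℝ be C² (in particular with equal mixed second partial derivatives) and m : ℝ × ℝ → ℝ be C¹ with m(x,t) > 0 for all (x,t). Suppose that ∂_t u + (∂_x u)²/2 = ln(m) and ∂_t m − ∂_x (m · ∂_x u) = 0 hold everywhere. Then u satisfies the nonlinear wave equation ∂_{tt} u(x,t) = (1 + (∂_x u(x,t))²) · ∂_{xx} u(x,t) for all (x,t). -/
/-!
Write `u_x, u_t, …` for partial derivatives. Differentiating `u_t + u_x²/2 = ln m` in `t` and in
`x` gives `u_tt + u_x u_xt = m_t / m` and `u_tx + u_x u_xx = m_x / m`, while the continuity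
equation says `m_t = m_x u_x + m u_xx`. Substituting it into the first identity, eliminating
`m_x / m` with the second and using `u_xt = u_tx` leaves `u_tt = (1 + u_x²) u_xx`.
-/

open Function

variable {E : Type*} [NormedAddCommGroup E] [NormedSpace ℝ E]

noncomputable def partialFst (f : ℝ → ℝ → E) (x t : ℝ) : E := deriv (fun y => f y t) x

noncomputable def partialSnd (f : ℝ → ℝ → E) (x t : ℝ) : E := deriv (fun s => f x s) t

section Slices

variable {f : ℝ → ℝ → E} {x t : ℝ}

theorem hasDerivAt_fst_slice (hf : DifferentiableAt ℝ (uncurry f) (x, t)) :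
    HasDerivAt (fun y => f y t) (fderiv ℝ (uncurry f) (x, t) (1, 0)) x := by
  have := hf.hasFDerivAt.comp_hasDerivAt x ((hasDerivAt_id' x).prodMk (hasDerivAt_const x t))
  exact this

theorem hasDerivAt_snd_slice (hf : DifferentiableAt ℝ (uncurry f) (x, t)) :
    HasDerivAt (fun s => f x s) (fderiv ℝ (uncurry f) (x, t) (0, 1)) t := by
  have := hf.hasFDerivAt.comp_hasDerivAt t ((hasDerivAt_const t x).prodMk (hasDerivAt_id' t))
  exact this

theorem differentiableAt_fst_slice (hf : DifferentiableAt ℝ (uncurry f) (x, t)) :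
    DifferentiableAt ℝ (fun y => f y t) x :=
  (hasDerivAt_fst_slice hf).differentiableAt

theorem differentiableAt_snd_slice (hf : DifferentiableAt ℝ (uncurry f) (x, t)) :
    DifferentiableAt ℝ (fun s => f x s) t :=
  (hasDerivAt_snd_slice hf).differentiableAt

theorem partialFst_eq_fderiv (hf : Differentiable ℝ (uncurry f)) :
    partialFst f = fun x t => fderiv ℝ (uncurry f) (x, t) (1, 0) :=
  funext₂ fun x t => (hasDerivAt_fst_slice (hf (x, t))).deriv

theorem partialSnd_eq_fderiv (hf : Differentiable ℝ (uncurry f)) :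
    partialSnd f = fun x t => fderiv ℝ (uncurry f) (x, t) (0, 1) :=
  funext₂ fun x t => (hasDerivAt_snd_slice (hf (x, t))).deriv

end Slices

section Smoothness

variable {f : ℝ → ℝ → E} {n : WithTop ℕ∞}

theorem ContDiff.partialFst (hf : ContDiff ℝ (n + 1) (uncurry f)) :
    ContDiff ℝ n (uncurry (partialFst f)) := by
  rw [partialFst_eq_fderiv (hf.differentiable (by simp))]
  exact (hf.fderiv_right le_rfl).clm_apply contDiff_const

theorem ContDiff.partialSnd (hf : ContDiff ℝ (n + 1) (uncurry f)) :
    ContDiff ℝ n (uncurry (partialSnd f)) := by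
  rw [partialSnd_eq_fderiv (hf.differentiable (by simp))]
  exact (hf.fderiv_right le_rfl).clm_apply contDiff_const

theorem partialSnd_partialFst_eq_partialFst_partialSnd (hf : ContDiff ℝ 2 (uncurry f))
    (x t : ℝ) : partialSnd (partialFst f) x t = partialFst (partialSnd f) x t := by
  set F := uncurry f
  have hF : Differentiable ℝ F := hf.differentiable two_ne_zero
  have hF' : Differentiable ℝ (fderiv ℝ F) :=
    (hf.fderiv_right (m := 1) (by norm_num)).differentiable one_ne_zero
  have ht : HasDerivAt (fun s => fderiv ℝ F (x, s)) (fderiv ℝ (fderiv ℝ F) (x, t) (0, 1)) t :=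
    hasDerivAt_snd_slice (f := fun a b => fderiv ℝ F (a, b)) (hF' (x, t))
  have hx : HasDerivAt (fun y => fderiv ℝ F (y, t)) (fderiv ℝ (fderiv ℝ F) (x, t) (1, 0)) x :=
    hasDerivAt_fst_slice (f := fun a b => fderiv ℝ F (a, b)) (hF' (x, t))
  rw [partialFst_eq_fderiv hF, partialSnd_eq_fderiv hF]
  calc _ = fderiv ℝ (fderiv ℝ F) (x, t) (0, 1) (1, 0) :=
        (ht.clm_apply (hasDerivAt_const t (1, 0))).deriv.trans (by simp)
    _ = fderiv ℝ (fderiv ℝ F) (x, t) (1, 0) (0, 1) :=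
        (hf.contDiffAt.isSymmSndFDerivAt (by simp)) _ _
    _ = _ := ((hx.clm_apply (hasDerivAt_const x (0, 1))).deriv.trans (by simp)).symm

end Smoothness

theorem deriv_add_mul_deriv_eq_deriv_div_of_add_sq_half_eq_log {f g h : ℝ → ℝ} {s : ℝ}
    (hf : DifferentiableAt ℝ f s) (hg : DifferentiableAt ℝ g s) (hh : DifferentiableAt ℝ h s)
    (hs : h s ≠ 0) (heq : ∀ r, f r + g r ^ 2 / 2 = Real.log (h r)) :
    deriv f s + g s * deriv g s = deriv h s / h s := by
  have hsum : HasDerivAt (fun r => f r + g r ^ 2 / 2) (deriv f s + g s * deriv g s) s := by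
    refine (hf.hasDerivAt.fun_add ((hg.hasDerivAt.fun_pow 2).div_const 2)).congr_deriv ?_
    push_cast
    ring
  rw [← deriv.log hh hs, ← hsum.deriv, funext heq]

/-- If `u` (C²) and `m` (C¹, positive) solve the forward-forward MFG system with
quadratic Hamiltonian `H(p)=p²/2` and logarithmic coupling `g(m)=ln m`, i.e.
`∂_t u + (∂_x u)²/2 = ln m` and `∂_t m − ∂_x(m ∂_x u) = 0`, then `u` satisfies the
nonlinear wave equation `∂_tt u = (1 + (∂_x u)²) ∂_xx u`. -/
theorem forward_forward_quadratic_log_nonlinear_wave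
    (u m : ℝ → ℝ → ℝ)
    (hu : ContDiff ℝ 2 (fun p : ℝ × ℝ => u p.1 p.2))
    (hm : ContDiff ℝ 1 (fun p : ℝ × ℝ => m p.1 p.2))
    (hmpos : ∀ x t : ℝ, 0 < m x t)
    (heq1 : ∀ x t : ℝ,
      deriv (fun s => u x s) t + (deriv (fun y => u y t) x) ^ 2 / 2 = Real.log (m x t))
    (heq2 : ∀ x t : ℝ,
      deriv (fun s => m x s) t -
        deriv (fun y => m y t * deriv (fun z => u z t) y) x = 0) :
    ∀ x t : ℝ,
      deriv (fun s => deriv (fun r => u x r) s) t =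
        (1 + (deriv (fun y => u y t) x) ^ 2) *
          deriv (fun y => deriv (fun z => u z t) y) x := by
  intro x t
  have hux : Differentiable ℝ (uncurry (partialFst u)) :=
    (hu.partialFst (n := 1)).differentiable one_ne_zero
  have hut : Differentiable ℝ (uncurry (partialSnd u)) :=
    (hu.partialSnd (n := 1)).differentiable one_ne_zero
  have hmd : Differentiable ℝ (uncurry m) := hm.differentiable one_ne_zero
  have hm0 : m x t ≠ 0 := (hmpos x t).ne'
  have hjb_dt : partialSnd (partialSnd u) x t + partialFst u x t * partialSnd (partialFst u) x t =
      partialSnd m x t / m x t :=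
    deriv_add_mul_deriv_eq_deriv_div_of_add_sq_half_eq_log
      (differentiableAt_snd_slice (hut (x, t))) (differentiableAt_snd_slice (hux (x, t)))
      (differentiableAt_snd_slice (hmd (x, t))) hm0 (heq1 x)
  have hjb_dx : partialFst (partialSnd u) x t + partialFst u x t * partialFst (partialFst u) x t =
      partialFst m x t / m x t :=
    deriv_add_mul_deriv_eq_deriv_div_of_add_sq_half_eq_log
      (differentiableAt_fst_slice (hut (x, t)))
      (differentiableAt_fst_slice (f := partialFst u) (hux (x, t)))
      (differentiableAt_fst_slice (hmd (x, t))) hm0 (fun y => heq1 y t)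
  have hcont : partialSnd m x t =
      partialFst m x t * partialFst u x t + m x t * partialFst (partialFst u) x t := by
    have h : partialSnd m x t - deriv (fun y => m y t * partialFst u y t) x = 0 := heq2 x t
    rwa [deriv_fun_mul (differentiableAt_fst_slice (hmd (x, t)))
      (differentiableAt_fst_slice (f := partialFst u) (hux (x, t))), sub_eq_zero] at h
  rw [partialSnd_partialFst_eq_partialFst_partialSnd hu, eq_div_iff hm0] at hjb_dt
  rw [eq_div_iff hm0] at hjb_dx
  change partialSnd (partialSnd u) x t = (1 + partialFst u x t ^ 2) * partialFst (partialFst u) x t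
  apply mul_right_cancel₀ hm0
  linear_combination hjb_dt - partialFst u x t * hjb_dx + hcont
end

section
/- For all v ∈ ℝ and m > 0: v(v − √(v² + m²)) − m² = 0 if and only if v < 0 and m² = 3v². -/
/-- For all `v ∈ ℝ` and `m > 0`,
`v(v − √(v²+m²)) − m² = 0 ↔ (v < 0 ∧ m² = 3v²)`. -/
theorem genuine_nonlinearity_degeneracy_first_field (v m : ℝ) (hm : 0 < m) :
    v * (v - Real.sqrt (v ^ 2 + m ^ 2)) - m ^ 2 = 0 ↔ v < 0 ∧ m ^ 2 = 3 * v ^ 2 := by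
  set s := Real.sqrt (v ^ 2 + m ^ 2) with hs
  have hnn : (0:ℝ) ≤ v ^ 2 + m ^ 2 := by positivity
  have hs2 : s ^ 2 = v ^ 2 + m ^ 2 := Real.sq_sqrt hnn
  have hsnn : 0 ≤ s := Real.sqrt_nonneg _
  constructor
  · intro h
    have hvs : v * s = v ^ 2 - m ^ 2 := by ring_nf at h ⊢; linarith
    have hv : v < 0 := by
      by_contra hv
      push_neg at hv
      have hvle : v ≤ s := by nlinarith
      nlinarith [mul_nonneg hv (sub_nonneg.mpr hvle)]
    refine ⟨hv, ?_⟩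
    have hsq : (v * s) ^ 2 = (v ^ 2 - m ^ 2) ^ 2 := by rw [hvs]
    have : v ^ 2 * (v ^ 2 + m ^ 2) = (v ^ 2 - m ^ 2) ^ 2 := by
      nlinarith [hsq]
    nlinarith [sq_nonneg m, hm]
  · rintro ⟨hv, hmv⟩
    have hse : s = -2 * v := by
      have h4 : v ^ 2 + m ^ 2 = (-2 * v) ^ 2 := by nlinarith
      rw [hs, h4]
      rw [Real.sqrt_sq (by linarith)]
    rw [hse]; nlinarith
end

section
/- Let λ₁(v,m) = −√(v²+m²), λ₂(v,m) = √(v²+m²), r₁(v,m) = (−v+√(v²+m²), m), r₂(v,m) = (v+√(v²+m²), −m), defined for v ∈ ℝ, m > 0. Then for every (v,m) with m > 0, one has (∇λ₁(v,m) · r₁(v,m) = 0 or ∇λ₂(v,m) · r₂(v,m) = 0) if and only if m² = 3v². Consequently, on the set {(v,m) : m > 0, m² ≠ 3v²} both characteristic fields of the system v_t + (v²/2 − m²/2)_x = 0, m_t − (vm)_x = 0 are genuinely nonlinear, i.e. ∇λ₁ · r₁ ≠ 0 and ∇λ₂ · r₂ ≠ 0. -/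
/-- With `λ₁ = −√(v²+m²)`, `λ₂ = √(v²+m²)`, `r₁ = (−v+√(v²+m²), m)`,
`r₂ = (v+√(v²+m²), −m)` for `m > 0`: `∇λ₁·r₁ = 0 ∨ ∇λ₂·r₂ = 0` holds iff `m² = 3v²`;
consequently, when `m² ≠ 3v²` both characteristic fields are genuinely nonlinear,
i.e. `∇λ₁·r₁ ≠ 0` and `∇λ₂·r₂ ≠ 0`. -/
theorem genuine_nonlinearity_characterization (v m : ℝ) (hm : 0 < m) :
    let gradDot₁ : ℝ :=
      deriv (fun x : ℝ => -Real.sqrt (x ^ 2 + m ^ 2)) v *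
          (-v + Real.sqrt (v ^ 2 + m ^ 2)) +
        deriv (fun y : ℝ => -Real.sqrt (v ^ 2 + y ^ 2)) m * m
    let gradDot₂ : ℝ :=
      deriv (fun x : ℝ => Real.sqrt (x ^ 2 + m ^ 2)) v *
          (v + Real.sqrt (v ^ 2 + m ^ 2)) +
        deriv (fun y : ℝ => Real.sqrt (v ^ 2 + y ^ 2)) m * (-m)
    ((gradDot₁ = 0 ∨ gradDot₂ = 0) ↔ m ^ 2 = 3 * v ^ 2) ∧
      (m ^ 2 ≠ 3 * v ^ 2 → gradDot₁ ≠ 0 ∧ gradDot₂ ≠ 0) := by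
  intro gradDot₁ gradDot₂
  set s := Real.sqrt (v ^ 2 + m ^ 2) with hs_def
  have hpos : (0:ℝ) < v ^ 2 + m ^ 2 := by positivity
  have hs : 0 < s := Real.sqrt_pos.mpr hpos
  have hsq : s ^ 2 = v ^ 2 + m ^ 2 := Real.sq_sqrt hpos.le
  have hsne : s ≠ 0 := hs.ne'
  -- derivatives
  have hd1 : HasDerivAt (fun x : ℝ => Real.sqrt (x ^ 2 + m ^ 2)) (v / s) v := by
    have h := (((hasDerivAt_pow 2 v).add_const (m ^ 2)).sqrt hpos.ne')
    convert h using 1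
    field_simp [hs_def]
    ring
  have hd2 : HasDerivAt (fun y : ℝ => Real.sqrt (v ^ 2 + y ^ 2)) (m / s) m := by
    have h := (((hasDerivAt_pow 2 m).const_add (v ^ 2)).sqrt hpos.ne')
    convert h using 1
    field_simp [hs_def]
    ring
  have e1 : deriv (fun x : ℝ => -Real.sqrt (x ^ 2 + m ^ 2)) v = -(v / s) := hd1.neg.deriv
  have e2 : deriv (fun y : ℝ => -Real.sqrt (v ^ 2 + y ^ 2)) m = -(m / s) := hd2.neg.deriv
  have e3 : deriv (fun x : ℝ => Real.sqrt (x ^ 2 + m ^ 2)) v = v / s := hd1.deriv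
  have e4 : deriv (fun y : ℝ => Real.sqrt (v ^ 2 + y ^ 2)) m = m / s := hd2.deriv
  have g1 : gradDot₁ = (v ^ 2 - m ^ 2 - v * s) / s := by
    show deriv (fun x : ℝ => -Real.sqrt (x ^ 2 + m ^ 2)) v * (-v + s) +
        deriv (fun y : ℝ => -Real.sqrt (v ^ 2 + y ^ 2)) m * m = _
    rw [e1, e2]; field_simp; ring
  have g2 : gradDot₂ = (v ^ 2 - m ^ 2 + v * s) / s := by
    show deriv (fun x : ℝ => Real.sqrt (x ^ 2 + m ^ 2)) v * (v + s) +
        deriv (fun y : ℝ => Real.sqrt (v ^ 2 + y ^ 2)) m * (-m) = _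
    rw [e3, e4]; field_simp; ring
  have h1 : gradDot₁ = 0 ↔ v ^ 2 - m ^ 2 - v * s = 0 := by
    rw [g1, div_eq_zero_iff]; simp [hsne]
  have h2 : gradDot₂ = 0 ↔ v ^ 2 - m ^ 2 + v * s = 0 := by
    rw [g2, div_eq_zero_iff]; simp [hsne]
  have key : (gradDot₁ = 0 ∨ gradDot₂ = 0) ↔ m ^ 2 = 3 * v ^ 2 := by
    rw [h1, h2]
    constructor
    · rintro (h | h)
      · have hsq2 : (v ^ 2 - m ^ 2) ^ 2 = v ^ 2 * (v ^ 2 + m ^ 2) := by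
          rw [← hsq]; linear_combination (v ^ 2 - m ^ 2 + v * s) * h
        have hfac : m ^ 2 * (m ^ 2 - 3 * v ^ 2) = 0 := by linear_combination hsq2
        rcases mul_eq_zero.mp hfac with h0 | h0
        · nlinarith
        · linarith
      · have hsq2 : (v ^ 2 - m ^ 2) ^ 2 = v ^ 2 * (v ^ 2 + m ^ 2) := by
          rw [← hsq]; linear_combination (v ^ 2 - m ^ 2 - v * s) * h
        have hfac : m ^ 2 * (m ^ 2 - 3 * v ^ 2) = 0 := by linear_combination hsq2
        rcases mul_eq_zero.mp hfac with h0 | h0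
        · nlinarith
        · linarith
    · intro hh
      have hv : v ≠ 0 := by
        intro h0; rw [h0] at hh; nlinarith
      have hsabs : s = 2 * |v| := by
        have : (2 * |v|) ^ 2 = v ^ 2 + m ^ 2 := by
          rw [mul_pow, sq_abs]; nlinarith
        nlinarith [abs_nonneg v, hs, sq_nonneg (s - 2 * |v|)]
      rcases lt_or_gt_of_ne hv with hneg | hpos'
      · left
        have hsv : s = -2 * v := by rw [hsabs, abs_of_neg hneg]; ring
        linear_combination -hh - v * hsv
      · right
        have hsv : s = 2 * v := by rw [hsabs, abs_of_pos hpos']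
        linear_combination -hh + v * hsv
  refine ⟨key, fun hne => ⟨?_, ?_⟩⟩
  · intro h; exact hne (key.mp (Or.inl h))
  · intro h; exact hne (key.mp (Or.inr h))
end

section
/- Define w₁(v,m) = √((m² + v²)³) − v³ + 3vm² on the set {(v,m) : v ∈ ℝ, m > 0}. Then w₁ is differentiable there and satisfies the first-order PDE (v + √(m² + v²)) ∂_v w₁(v,m) − m ∂_m w₁(v,m) = 0 for all v ∈ ℝ, m > 0; equivalently, ∇w₁(v,m) is orthogonal to r₂(v,m) = (v + √(v²+m²), −m), so w₁ is a Riemann invariant of the system of conservation laws with flux F(v,m) = (v²/2 − m²/2, −vm). -/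
/-! With `s = √(m² + v²)` one has `√((m² + v²)³) = s³`, so `∂ᵥw₁ = 3(vs - v² + m²)` and
`∂ₘw₁ = 3m(s + 2v)`. The combination `(v + s) ∂ᵥw₁ - m ∂ₘw₁` then expands to
`3v(s² - m² - v²) = 0`. -/

open Real

lemma Real.sqrt_pow_three (a : ℝ) : √(a ^ 3) = √a ^ 3 := by
  rcases le_or_gt 0 a with ha | ha
  · rw [pow_succ, sqrt_mul (by positivity), sqrt_sq ha, pow_succ, sq_sqrt ha]
  · rw [sqrt_eq_zero_of_nonpos ha.le, sqrt_eq_zero_of_nonpos (by nlinarith [sq_nonneg a])]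
    norm_num

theorem HasDerivAt.sqrt_pow_three {f : ℝ → ℝ} {f' x : ℝ} (hf : HasDerivAt f f' x)
    (hx : 0 < f x) : HasDerivAt (fun y => √(f y ^ 3)) (3 / 2 * f' * √(f x)) x := by
  simp only [Real.sqrt_pow_three]
  refine ((hf.sqrt hx.ne').pow 3).congr_deriv ?_
  have hs : √(f x) ≠ 0 := (sqrt_pos.2 hx).ne'
  field_simp
  ring

namespace ForwardForwardMFG

noncomputable def w₁ (v m : ℝ) : ℝ :=
  √((m ^ 2 + v ^ 2) ^ 3) - v ^ 3 + 3 * v * m ^ 2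

variable {v m : ℝ}

lemma hasDerivAt_w₁_fst (hvm : 0 < m ^ 2 + v ^ 2) :
    HasDerivAt (fun x => w₁ x m) (3 * v * √(m ^ 2 + v ^ 2) - 3 * v ^ 2 + 3 * m ^ 2) v :=
  ((((hasDerivAt_pow 2 v).const_add (m ^ 2)).sqrt_pow_three hvm).sub (hasDerivAt_pow 3 v)
    |>.add (((hasDerivAt_id' v).const_mul 3).mul_const (m ^ 2))).congr_deriv (by ring)

lemma hasDerivAt_w₁_snd (hvm : 0 < m ^ 2 + v ^ 2) :
    HasDerivAt (fun y => w₁ v y) (3 * m * √(m ^ 2 + v ^ 2) + 6 * v * m) m :=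
  ((((hasDerivAt_pow 2 m).add_const (v ^ 2)).sqrt_pow_three hvm).sub_const (v ^ 3)
    |>.add ((hasDerivAt_pow 2 m).const_mul (3 * v))).congr_deriv (by ring)

lemma differentiableAt_w₁ (hvm : 0 < m ^ 2 + v ^ 2) :
    DifferentiableAt ℝ (fun p : ℝ × ℝ => w₁ p.1 p.2) (v, m) := by
  unfold w₁
  fun_prop (disch := positivity)

theorem w₁_pde (hvm : 0 < m ^ 2 + v ^ 2) :
    (v + √(m ^ 2 + v ^ 2)) * deriv (fun x => w₁ x m) v - m * deriv (fun y => w₁ v y) m = 0 := by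
  rw [(hasDerivAt_w₁_fst hvm).deriv, (hasDerivAt_w₁_snd hvm).deriv]
  linear_combination 3 * v * mul_self_sqrt hvm.le

end ForwardForwardMFG

/-- `w₁(v,m) = √((m²+v²)³) − v³ + 3vm²` is differentiable on
`{(v,m) : m > 0}` and satisfies `(v + √(m²+v²)) ∂_v w₁ − m ∂_m w₁ = 0` there;
equivalently `∇w₁ ⊥ r₂ = (v+√(v²+m²), −m)`, so `w₁` is a Riemann invariant of the
system of conservation laws with flux `F(v,m) = (v²/2 − m²/2, −vm)`. -/
theorem riemann_invariant_w1 :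
    let w₁ : ℝ → ℝ → ℝ := fun v m =>
      Real.sqrt ((m ^ 2 + v ^ 2) ^ 3) - v ^ 3 + 3 * v * m ^ 2
    ∀ v m : ℝ, 0 < m →
      DifferentiableAt ℝ (fun p : ℝ × ℝ => w₁ p.1 p.2) (v, m) ∧
      (v + Real.sqrt (m ^ 2 + v ^ 2)) * deriv (fun x : ℝ => w₁ x m) v -
          m * deriv (fun y : ℝ => w₁ v y) m = 0 ∧
      deriv (fun x : ℝ => w₁ x m) v * (v + Real.sqrt (v ^ 2 + m ^ 2)) +
          deriv (fun y : ℝ => w₁ v y) m * (-m) = 0 := by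
  intro w₁ v m hm
  have hvm : 0 < m ^ 2 + v ^ 2 := by positivity
  have pde : (v + √(m ^ 2 + v ^ 2)) * deriv (fun x => w₁ x m) v -
      m * deriv (fun y => w₁ v y) m = 0 := ForwardForwardMFG.w₁_pde hvm
  refine ⟨ForwardForwardMFG.differentiableAt_w₁ hvm, pde, ?_⟩
  rw [add_comm (v ^ 2)]
  linear_combination pde
end

section
/- Let ε > 0 and let v, m : ℝ × [0,∞) → ℝ be 1-periodic in the space variable x, continuous on ℝ × [0,∞) and C² on ℝ × (0,∞), with m(x,t) > 0 for all (x,t). Suppose that on ℝ × (0,∞) they satisfy the parabolic system ∂_t v + ∂_x (v²/2 − m²/2) = ε ∂_{xx} v and ∂_t m − ∂_x (m v) = ε ∂_{xx} m, and that the initial data satisfy ∫₀¹ v(x,0) dx = 0 and ∫₀¹ m(x,0) dx = 1. Then the solution converges in L¹ to the constant stationary state (0,1): lim_{t→∞} ∫₀¹ |v(x,t)| dx = 0 and lim_{t→∞} ∫₀¹ |m(x,t) − 1| dx = 0. -/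
/-!
The energy `E(t) = ∫₀¹ v² + (m - 1)²` is a Lyapunov functional. Both equations are in
conservation form, so the means of `v` and `m` are conserved, and on the circle every transport
term in `E'` is an exact `x`-derivative; what remains is `E' = -2ε ∫₀¹ v_x² + m_x²`. The
Poincaré–Wirtinger inequality for the mean-zero functions `v` and `m - 1` bounds `E` by that
dissipation, so `E' ≤ -2εE` and `E` decays exponentially. Cauchy–Schwarz turns this into
`L¹` convergence.
-/

open Filter Set Function MeasureTheory
open scoped Interval

theorem sq_intervalIntegral_abs_le_intervalIntegral_sq {g : ℝ → ℝ}
    (hg : ContinuousOn g (Icc 0 1)) :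
    (∫ x in (0:ℝ)..1, |g x|) ^ 2 ≤ ∫ x in (0:ℝ)..1, g x ^ 2 := by
  rw [← uIcc_of_le zero_le_one] at hg
  set I := ∫ x in (0:ℝ)..1, |g x|
  have hg_abs : IntervalIntegrable (fun x => |g x|) volume 0 1 := hg.abs.intervalIntegrable
  have hg_sq : IntervalIntegrable (fun x => g x ^ 2) volume 0 1 := (hg.pow 2).intervalIntegrable
  have hvar : ∫ x in (0:ℝ)..1, (|g x| - I) ^ 2 = (∫ x in (0:ℝ)..1, g x ^ 2) - I ^ 2 := by
    have hexp : ∀ x, (|g x| - I) ^ 2 = g x ^ 2 - 2 * I * |g x| + I ^ 2 := fun x => by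
      rw [sub_sq, sq_abs]; ring
    simp_rw [hexp]
    rw [intervalIntegral.integral_add (hg_sq.sub (hg_abs.const_mul _)) intervalIntegrable_const,
      intervalIntegral.integral_sub hg_sq (hg_abs.const_mul _),
      intervalIntegral.integral_const_mul]
    simp only [intervalIntegral.integral_const, sub_zero, one_smul]
    ring
  have : 0 ≤ ∫ x in (0:ℝ)..1, (|g x| - I) ^ 2 :=
    intervalIntegral.integral_nonneg zero_le_one fun x _ => sq_nonneg _
  linarith

theorem abs_le_intervalIntegral_abs_deriv {f f' : ℝ → ℝ}
    (hf : ∀ x, HasDerivAt f (f' x) x) (hf' : Continuous f')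
    (hmean : ∫ x in (0:ℝ)..1, f x = 0) {x : ℝ} (hx : x ∈ Icc (0:ℝ) 1) :
    |f x| ≤ ∫ y in (0:ℝ)..1, |f' y| := by
  have hfc : Continuous f := continuous_iff_continuousAt.2 fun x => (hf x).continuousAt
  have hosc : ∀ y ∈ Ι (0:ℝ) 1, ‖f x - f y‖ ≤ ∫ z in (0:ℝ)..1, |f' z| := by
    intro y hy
    rw [uIoc_of_le zero_le_one] at hy
    rw [← intervalIntegral.integral_eq_sub_of_hasDerivAt (fun z _ => hf z)
      (hf'.intervalIntegrable _ _), intervalIntegral.integral_of_le zero_le_one]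
    calc ‖∫ z in y..x, f' z‖ ≤ ∫ z in Ι y x, ‖f' z‖ :=
          intervalIntegral.norm_integral_le_integral_norm_uIoc
      _ ≤ ∫ z in Ioc 0 1, |f' z| := by
          refine setIntegral_mono_set (hf'.abs.integrableOn_Icc.mono_set Ioc_subset_Icc_self)
            (Eventually.of_forall fun z => abs_nonneg _) (Eventually.of_forall ?_)
          exact Ioc_subset_Ioc (le_min hy.1.le hx.1) (max_le hy.2 hx.2)
  have hfx : f x = ∫ y in (0:ℝ)..1, (f x - f y) := by
    rw [intervalIntegral.integral_sub intervalIntegrable_const (hfc.intervalIntegrable _ _),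
      hmean]
    simp
  rw [hfx]
  simpa using intervalIntegral.norm_integral_le_of_norm_le_const hosc

theorem intervalIntegral_sq_le_intervalIntegral_sq_deriv {f f' : ℝ → ℝ}
    (hf : ∀ x, HasDerivAt f (f' x) x) (hf' : Continuous f')
    (hmean : ∫ x in (0:ℝ)..1, f x = 0) :
    ∫ x in (0:ℝ)..1, f x ^ 2 ≤ ∫ x in (0:ℝ)..1, f' x ^ 2 := by
  have hfc : Continuous f := continuous_iff_continuousAt.2 fun x => (hf x).continuousAt
  calc ∫ x in (0:ℝ)..1, f x ^ 2 ≤ ∫ _ in (0:ℝ)..1, (∫ y in (0:ℝ)..1, |f' y|) ^ 2 := by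
        refine intervalIntegral.integral_mono_on zero_le_one ((hfc.pow 2).intervalIntegrable _ _)
          intervalIntegrable_const fun x hx => ?_
        rw [← sq_abs]
        gcongr
        exact abs_le_intervalIntegral_abs_deriv hf hf' hmean hx
    _ = (∫ y in (0:ℝ)..1, |f' y|) ^ 2 := by simp
    _ ≤ ∫ x in (0:ℝ)..1, f' x ^ 2 :=
        sq_intervalIntegral_abs_le_intervalIntegral_sq hf'.continuousOn

theorem intervalIntegral_eq_zero_of_hasDerivAt_of_periodic {Φ φ : ℝ → ℝ}
    (hΦ : Periodic Φ 1) (hd : ∀ x, HasDerivAt Φ (φ x) x) (hφ : Continuous φ) :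
    ∫ x in (0:ℝ)..1, φ x = 0 := by
  rw [intervalIntegral.integral_eq_sub_of_hasDerivAt (fun x _ => hd x) (hφ.intervalIntegrable _ _),
    ← zero_add 1, hΦ, sub_self]

theorem le_mul_exp_of_hasDerivAt_le_neg_mul {W W' : ℝ → ℝ} {c a : ℝ}
    (hd : ∀ t ≥ a, HasDerivAt W (W' t) t) (hle : ∀ t ≥ a, W' t ≤ -c * W t)
    {t : ℝ} (ht : a ≤ t) : W t ≤ W a * Real.exp (-c * (t - a)) := by
  have := le_gronwallBound_of_liminf_deriv_right_le (f' := W') (K := -c) (ε := 0) (b := t)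
    (fun s hs => (hd s hs.1).continuousAt.continuousWithinAt)
    (fun s hs _ hr => (hd s hs.1).hasDerivWithinAt.liminf_right_slope_le hr) le_rfl
    (fun s hs => (hle s hs.1).trans_eq (add_zero _).symm) t ⟨ht, le_rfl⟩
  rwa [gronwallBound_ε0] at this

theorem tendsto_zero_of_sq_le {α : Type*} {l : Filter α} {a b : α → ℝ}
    (ha : ∀ᶠ s in l, 0 ≤ a s) (hab : ∀ᶠ s in l, a s ^ 2 ≤ b s)
    (hb : Tendsto b l (nhds 0)) :
    Tendsto a l (nhds 0) := by
  have hsqrt : Tendsto (fun s => Real.sqrt (b s)) l (nhds 0) := by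
    simpa [Function.comp_def] using (Real.continuous_sqrt.tendsto 0).comp hb
  refine tendsto_of_tendsto_of_tendsto_of_le_of_le' tendsto_const_nhds hsqrt ha ?_
  filter_upwards [hab] with s habs
  exact Real.le_sqrt_of_sq_le habs

noncomputable def partialX (u : ℝ → ℝ → ℝ) (x t : ℝ) : ℝ :=
  fderiv ℝ (uncurry u) (x, t) (1, 0)

noncomputable def partialT (u : ℝ → ℝ → ℝ) (x t : ℝ) : ℝ :=
  fderiv ℝ (uncurry u) (x, t) (0, 1)

section PartialDerivatives

variable {u : ℝ → ℝ → ℝ} {x t : ℝ}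

theorem hasDerivAt_partialX (hu : DifferentiableAt ℝ (uncurry u) (x, t)) :
    HasDerivAt (fun y => u y t) (partialX u x t) x :=
  hu.hasFDerivAt.comp_hasDerivAt_of_eq x ((hasDerivAt_id x).prodMk (hasDerivAt_const x t)) rfl

theorem hasDerivAt_partialT (hu : DifferentiableAt ℝ (uncurry u) (x, t)) :
    HasDerivAt (fun s => u x s) (partialT u x t) t :=
  hu.hasFDerivAt.comp_hasDerivAt_of_eq t ((hasDerivAt_const t x).prodMk (hasDerivAt_id t)) rfl

theorem contDiffOn_partialX {n k : WithTop ℕ∞} {s : Set (ℝ × ℝ)}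
    (hu : ContDiffOn ℝ n (uncurry u) s) (hs : IsOpen s) (hk : k + 1 ≤ n) :
    ContDiffOn ℝ k (uncurry (partialX u)) s :=
  (hu.fderiv_of_isOpen hs hk).clm_apply contDiffOn_const

theorem contDiffOn_partialT {n k : WithTop ℕ∞} {s : Set (ℝ × ℝ)}
    (hu : ContDiffOn ℝ n (uncurry u) s) (hs : IsOpen s) (hk : k + 1 ≤ n) :
    ContDiffOn ℝ k (uncurry (partialT u)) s :=
  (hu.fderiv_of_isOpen hs hk).clm_apply contDiffOn_const

theorem partialX_add_of_periodic {c : ℝ} (hu : ∀ x t, u (x + c) t = u x t) :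
    partialX u (x + c) t = partialX u x t := by
  have h : (fun p : ℝ × ℝ => uncurry u (p + (c, 0))) = uncurry u := by
    ext ⟨y, s⟩; simp [hu]
  conv_rhs => rw [partialX, ← h, fderiv_comp_add_right]
  simp [partialX]

end PartialDerivatives

section ParametricIntegrals

variable {u u' : ℝ → ℝ → ℝ} {J : Set ℝ}

theorem ContinuousOn.continuous_slice (hu : ContinuousOn (uncurry u) (univ ×ˢ J)) {t : ℝ}
    (ht : t ∈ J) : Continuous fun x => u x t :=
  hu.comp_continuous (continuous_id.prodMk continuous_const) fun _ => ⟨mem_univ _, ht⟩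

theorem ContinuousOn.continuousOn_intervalIntegral_slice
    (hu : ContinuousOn (uncurry u) (univ ×ˢ J)) (a b : ℝ) :
    ContinuousOn (fun t => ∫ x in a..b, u x t) J := by
  rw [continuousOn_iff_continuous_domRestrict]
  have hsub : Continuous (uncurry fun (t : J) x => u x t) :=
    hu.comp_continuous (continuous_snd.prodMk (continuous_subtype_val.comp continuous_fst))
      fun p => ⟨mem_univ _, p.1.2⟩
  exact intervalIntegral.continuous_parametric_intervalIntegral_of_continuous' hsub a b

theorem hasDerivAt_intervalIntegral_slice (hJ : IsOpen J)
    (hu : ContinuousOn (uncurry u) (univ ×ˢ J)) (hu' : ContinuousOn (uncurry u') (univ ×ˢ J))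
    (hd : ∀ x, ∀ t ∈ J, HasDerivAt (fun s => u x s) (u' x t) t) (a b : ℝ) {t₀ : ℝ}
    (ht₀ : t₀ ∈ J) :
    HasDerivAt (fun t => ∫ x in a..b, u x t) (∫ x in a..b, u' x t₀) t₀ := by
  obtain ⟨δ, hδ, hball⟩ := Metric.isOpen_iff.1 hJ t₀ ht₀
  have hK : uIcc a b ×ˢ Metric.closedBall t₀ (δ / 2) ⊆ univ ×ˢ J := fun p hp =>
    ⟨mem_univ _, hball (Metric.closedBall_subset_ball (half_lt_self hδ) hp.2)⟩
  obtain ⟨C, hC⟩ := (isCompact_uIcc.prod (isCompact_closedBall t₀ (δ / 2)))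
    |>.exists_bound_of_continuousOn (hu'.mono hK)
  have hsJ : Metric.ball t₀ (δ / 2) ⊆ J :=
    (Metric.ball_subset_ball (half_le_self hδ.le)).trans hball
  refine (intervalIntegral.hasDerivAt_integral_of_dominated_loc_of_deriv_le
    (F := fun t x => u x t) (F' := fun t x => u' x t) (bound := fun _ => C)
    (Metric.ball_mem_nhds t₀ (half_pos hδ)) ?_
    ((hu.continuous_slice ht₀).intervalIntegrable _ _)
    (hu'.continuous_slice ht₀).aestronglyMeasurable.restrict ?_ intervalIntegrable_const ?_).2
  · filter_upwards [hJ.mem_nhds ht₀] with t ht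
    exact (hu.continuous_slice ht).aestronglyMeasurable.restrict
  · exact Eventually.of_forall fun x hx t ht =>
      hC (x, t) ⟨uIoc_subset_uIcc hx, Metric.ball_subset_closedBall ht⟩
  · exact Eventually.of_forall fun x _ t ht => hd x t (hsJ ht)

end ParametricIntegrals

theorem isOpen_univ_prod_Ioi : IsOpen ((univ : Set ℝ) ×ˢ Ioi (0:ℝ)) :=
  isOpen_univ.prod isOpen_Ioi

theorem intervalIntegral_slice_eq_of_integral_partialT_eq_zero {u : ℝ → ℝ → ℝ} {a b : ℝ}
    (hc : ContinuousOn (uncurry u) (univ ×ˢ Ici 0))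
    (hsm : ContDiffOn ℝ 1 (uncurry u) (univ ×ˢ Ioi 0))
    (h0 : ∀ t > 0, ∫ x in a..b, partialT u x t = 0) {t : ℝ} (ht : 0 ≤ t) :
    ∫ x in a..b, u x t = ∫ x in a..b, u x 0 := by
  rcases ht.eq_or_lt with rfl | ht
  · rfl
  have hd : ∀ s > 0, HasDerivAt (fun s => ∫ x in a..b, u x s) 0 s := fun s hs => by
    rw [← h0 s hs]
    exact hasDerivAt_intervalIntegral_slice isOpen_Ioi
      (hc.mono (prod_mono le_rfl Ioi_subset_Ici_self))
      (contDiffOn_partialT (k := 0) hsm isOpen_univ_prod_Ioi (by simp)).continuousOn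
      (fun x r hr => hasDerivAt_partialT ((hsm.differentiableOn one_ne_zero).differentiableAt
        (isOpen_univ_prod_Ioi.mem_nhds ⟨mem_univ x, hr⟩)))
      a b hs
  obtain ⟨c, hc0, hslope⟩ := exists_hasDerivAt_eq_slope _ (fun _ => 0) ht
    ((hc.continuousOn_intervalIntegral_slice a b).mono Icc_subset_Ici_self) fun s hs => hd s hs.1
  rw [eq_comm, div_eq_zero_iff, sub_eq_zero, sub_zero] at hslope
  exact hslope.resolve_right ht.ne'

section UpperHalfPlane

variable {u : ℝ → ℝ → ℝ} {x t : ℝ}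

theorem continuousOn_partials_of_contDiffOn
    (hu : ContDiffOn ℝ 2 (uncurry u) (univ ×ˢ Ioi 0)) :
    ContinuousOn (uncurry (partialX u)) (univ ×ˢ Ioi 0) ∧
      ContinuousOn (uncurry (partialT u)) (univ ×ˢ Ioi 0) :=
  ⟨(contDiffOn_partialX (k := 1) hu isOpen_univ_prod_Ioi (by norm_num)).continuousOn,
    (contDiffOn_partialT (k := 1) hu isOpen_univ_prod_Ioi (by norm_num)).continuousOn⟩

theorem hasDerivAt_partials_of_contDiffOn
    (hu : ContDiffOn ℝ 2 (uncurry u) (univ ×ˢ Ioi 0)) (ht : 0 < t) :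
    HasDerivAt (fun y => u y t) (partialX u x t) x ∧
      HasDerivAt (fun s => u x s) (partialT u x t) t ∧
      HasDerivAt (fun y => partialX u y t) (partialX (partialX u) x t) x := by
  have hmem : (x, t) ∈ (univ : Set ℝ) ×ˢ Ioi 0 := ⟨mem_univ x, ht⟩
  have hd := (hu.differentiableOn two_ne_zero).differentiableAt
    (isOpen_univ_prod_Ioi.mem_nhds hmem)
  have hdx := ((contDiffOn_partialX (k := 1) hu isOpen_univ_prod_Ioi (by norm_num)).differentiableOn
    one_ne_zero).differentiableAt (isOpen_univ_prod_Ioi.mem_nhds hmem)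
  exact ⟨hasDerivAt_partialX hd, hasDerivAt_partialT hd, hasDerivAt_partialX hdx⟩

theorem deriv_deriv_eq_partialX_partialX (hu : ContDiffOn ℝ 2 (uncurry u) (univ ×ˢ Ioi 0))
    (ht : 0 < t) :
    deriv (fun y => deriv (fun z => u z t) y) x = partialX (partialX u) x t := by
  have hfun : (fun y => deriv (fun z => u z t) y) = fun y => partialX u y t :=
    funext fun y => (hasDerivAt_partials_of_contDiffOn hu ht).1.deriv
  rw [hfun]
  exact (hasDerivAt_partials_of_contDiffOn hu ht).2.2.deriv

end UpperHalfPlane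

structure IsForwardForwardSolution (ε : ℝ) (v m : ℝ → ℝ → ℝ) : Prop where
  periodic_v : ∀ x t : ℝ, v (x + 1) t = v x t
  periodic_m : ∀ x t : ℝ, m (x + 1) t = m x t
  continuousOn_v : ContinuousOn (uncurry v) (univ ×ˢ Ici 0)
  continuousOn_m : ContinuousOn (uncurry m) (univ ×ˢ Ici 0)
  contDiffOn_v : ContDiffOn ℝ 2 (uncurry v) (univ ×ˢ Ioi 0)
  contDiffOn_m : ContDiffOn ℝ 2 (uncurry m) (univ ×ˢ Ioi 0)
  pde_v : ∀ x t : ℝ, 0 < t →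
    deriv (fun s => v x s) t + deriv (fun y => (v y t) ^ 2 / 2 - (m y t) ^ 2 / 2) x =
      ε * deriv (fun y => deriv (fun z => v z t) y) x
  pde_m : ∀ x t : ℝ, 0 < t →
    deriv (fun s => m x s) t - deriv (fun y => m y t * v y t) x =
      ε * deriv (fun y => deriv (fun z => m z t) y) x

noncomputable def energy (v m : ℝ → ℝ → ℝ) (t : ℝ) : ℝ :=
  ∫ x in (0:ℝ)..1, (v x t ^ 2 + (m x t - 1) ^ 2)

noncomputable def dissipation (v m : ℝ → ℝ → ℝ) (t : ℝ) : ℝ :=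
  ∫ x in (0:ℝ)..1, (partialX v x t ^ 2 + partialX m x t ^ 2)

namespace IsForwardForwardSolution

variable {ε : ℝ} {v m : ℝ → ℝ → ℝ} {x t : ℝ}

theorem partialT_v_eq (h : IsForwardForwardSolution ε v m) (ht : 0 < t) :
    partialT v x t =
      ε * partialX (partialX v) x t - v x t * partialX v x t + m x t * partialX m x t := by
  obtain ⟨hvx, hvt, -⟩ := hasDerivAt_partials_of_contDiffOn (x := x) h.contDiffOn_v ht
  obtain ⟨hmx, -, -⟩ := hasDerivAt_partials_of_contDiffOn (x := x) h.contDiffOn_m ht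
  have hflux : HasDerivAt (fun y => v y t ^ 2 / 2 - m y t ^ 2 / 2)
      (v x t * partialX v x t - m x t * partialX m x t) x := by
    refine (((hvx.pow 2).div_const 2).sub ((hmx.pow 2).div_const 2)).congr_deriv ?_
    push_cast; ring
  have hpde := h.pde_v x t ht
  rw [hvt.deriv, hflux.deriv, deriv_deriv_eq_partialX_partialX h.contDiffOn_v ht] at hpde
  linarith

theorem partialT_m_eq (h : IsForwardForwardSolution ε v m) (ht : 0 < t) :
    partialT m x t =
      partialX m x t * v x t + m x t * partialX v x t + ε * partialX (partialX m) x t := by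
  obtain ⟨hvx, -, -⟩ := hasDerivAt_partials_of_contDiffOn (x := x) h.contDiffOn_v ht
  obtain ⟨hmx, hmt, -⟩ := hasDerivAt_partials_of_contDiffOn (x := x) h.contDiffOn_m ht
  have hflux : HasDerivAt (fun y => m y t * v y t)
      (partialX m x t * v x t + m x t * partialX v x t) x := hmx.mul hvx
  have hpde := h.pde_m x t ht
  rw [hmt.deriv, hflux.deriv, deriv_deriv_eq_partialX_partialX h.contDiffOn_m ht] at hpde
  linarith

theorem integral_v_eq (h : IsForwardForwardSolution ε v m) (ht : 0 ≤ t) :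
    ∫ x in (0:ℝ)..1, v x t = ∫ x in (0:ℝ)..1, v x 0 := by
  refine intervalIntegral_slice_eq_of_integral_partialT_eq_zero h.continuousOn_v
    (h.contDiffOn_v.of_le (by norm_num)) (fun s hs => ?_) ht
  refine intervalIntegral_eq_zero_of_hasDerivAt_of_periodic
    (Φ := fun y => ε * partialX v y s - v y s ^ 2 / 2 + m y s ^ 2 / 2)
    (fun y => by simp only [h.periodic_v, h.periodic_m, partialX_add_of_periodic h.periodic_v])
    (fun y => ?_) ((continuousOn_partials_of_contDiffOn h.contDiffOn_v).2.continuous_slice hs)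
  obtain ⟨hvx, -, hvxx⟩ := hasDerivAt_partials_of_contDiffOn (x := y) h.contDiffOn_v hs
  obtain ⟨hmx, -, -⟩ := hasDerivAt_partials_of_contDiffOn (x := y) h.contDiffOn_m hs
  rw [h.partialT_v_eq hs]
  refine (((hvxx.const_mul ε).sub ((hvx.pow 2).div_const 2)).add
    ((hmx.pow 2).div_const 2)).congr_deriv ?_
  push_cast; ring

theorem integral_m_eq (h : IsForwardForwardSolution ε v m) (ht : 0 ≤ t) :
    ∫ x in (0:ℝ)..1, m x t = ∫ x in (0:ℝ)..1, m x 0 := by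
  refine intervalIntegral_slice_eq_of_integral_partialT_eq_zero h.continuousOn_m
    (h.contDiffOn_m.of_le (by norm_num)) (fun s hs => ?_) ht
  refine intervalIntegral_eq_zero_of_hasDerivAt_of_periodic
    (Φ := fun y => m y s * v y s + ε * partialX m y s)
    (fun y => by simp only [h.periodic_v, h.periodic_m, partialX_add_of_periodic h.periodic_m])
    (fun y => ?_) ((continuousOn_partials_of_contDiffOn h.contDiffOn_m).2.continuous_slice hs)
  obtain ⟨hvx, -, -⟩ := hasDerivAt_partials_of_contDiffOn (x := y) h.contDiffOn_v hs
  obtain ⟨hmx, -, hmxx⟩ := hasDerivAt_partials_of_contDiffOn (x := y) h.contDiffOn_m hs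
  rw [h.partialT_m_eq hs]
  exact (hmx.mul hvx).add (hmxx.const_mul ε)

theorem continuous_partial_slices (h : IsForwardForwardSolution ε v m) (ht : 0 < t) :
    Continuous (fun x => partialX v x t) ∧ Continuous (fun x => partialX m x t) ∧
      Continuous (fun x => partialT v x t) ∧ Continuous (fun x => partialT m x t) :=
  have hv := continuousOn_partials_of_contDiffOn h.contDiffOn_v
  have hm := continuousOn_partials_of_contDiffOn h.contDiffOn_m
  ⟨hv.1.continuous_slice ht, hm.1.continuous_slice ht,
    hv.2.continuous_slice ht, hm.2.continuous_slice ht⟩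

/-- The transport terms integrate to zero because
`2v (m m_x - v v_x) + 2(m - 1)(m v)_x = (2 v m² - 2 v m - 2 v³ / 3)_x`. -/
theorem integral_partialT_energy_density_eq (h : IsForwardForwardSolution ε v m) (ht : 0 < t) :
    ∫ x in (0:ℝ)..1, (2 * v x t * partialT v x t + 2 * (m x t - 1) * partialT m x t) =
      -(2 * ε) * dissipation v m t := by
  have hvc := h.continuousOn_v.continuous_slice ht.le
  have hmc := h.continuousOn_m.continuous_slice ht.le
  obtain ⟨hvxc, hmxc, hvtc, hmtc⟩ := h.continuous_partial_slices ht
  have hdens : Continuous fun x => 2 * v x t * partialT v x t + 2 * (m x t - 1) * partialT m x t :=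
    by fun_prop
  have hdiss : Continuous fun x => 2 * ε * (partialX v x t ^ 2 + partialX m x t ^ 2) := by fun_prop
  have hzero := intervalIntegral_eq_zero_of_hasDerivAt_of_periodic
    (Φ := fun y => 2 * (v y t * m y t ^ 2 - v y t * m y t - v y t ^ 3 / 3
      + ε * (v y t * partialX v y t) + ε * ((m y t - 1) * partialX m y t)))
    (fun y => by
      simp only [h.periodic_v, h.periodic_m, partialX_add_of_periodic h.periodic_v,
        partialX_add_of_periodic h.periodic_m])
    (fun y => ?_) (hdens.add hdiss)
  · simp only [Pi.add_apply] at hzero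
    rw [intervalIntegral.integral_add (hdens.intervalIntegrable _ _)
      (hdiss.intervalIntegrable _ _), intervalIntegral.integral_const_mul] at hzero
    rw [dissipation]
    linarith
  obtain ⟨hvx, -, hvxx⟩ := hasDerivAt_partials_of_contDiffOn (x := y) h.contDiffOn_v ht
  obtain ⟨hmx, -, hmxx⟩ := hasDerivAt_partials_of_contDiffOn (x := y) h.contDiffOn_m ht
  refine (((((hvx.mul (hmx.pow 2)).sub (hvx.mul hmx)).sub ((hvx.pow 3).div_const 3)).add
    ((hvx.mul hvxx).const_mul ε)).add (((hmx.sub_const 1).mul hmxx).const_mul ε)).const_mul 2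
    |>.congr_deriv ?_
  simp only [Pi.add_apply, Pi.pow_apply]
  rw [h.partialT_v_eq ht, h.partialT_m_eq ht]
  push_cast
  ring

theorem hasDerivAt_energy (h : IsForwardForwardSolution ε v m) (ht : 0 < t) :
    HasDerivAt (energy v m) (-(2 * ε) * dissipation v m t) t := by
  rw [← h.integral_partialT_energy_density_eq ht]
  have hv := h.continuousOn_v.mono (prod_mono le_rfl Ioi_subset_Ici_self)
  have hm := h.continuousOn_m.mono (prod_mono le_rfl Ioi_subset_Ici_self)
  have hvt := (continuousOn_partials_of_contDiffOn h.contDiffOn_v).2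
  have hmt := (continuousOn_partials_of_contDiffOn h.contDiffOn_m).2
  have hdens : ContinuousOn (uncurry fun x t => v x t ^ 2 + (m x t - 1) ^ 2) (univ ×ˢ Ioi 0) :=
    (hv.pow 2).add ((hm.sub continuousOn_const).pow 2)
  have hdens' : ContinuousOn
      (uncurry fun x t => 2 * v x t * partialT v x t + 2 * (m x t - 1) * partialT m x t)
      (univ ×ˢ Ioi 0) :=
    ((continuousOn_const.mul hv).mul hvt).add
      ((continuousOn_const.mul (hm.sub continuousOn_const)).mul hmt)
  refine hasDerivAt_intervalIntegral_slice isOpen_Ioi hdens hdens' (fun x s hs => ?_) 0 1 ht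
  obtain ⟨-, hvs, -⟩ := hasDerivAt_partials_of_contDiffOn (x := x) h.contDiffOn_v hs
  obtain ⟨-, hms, -⟩ := hasDerivAt_partials_of_contDiffOn (x := x) h.contDiffOn_m hs
  refine ((hvs.pow 2).add ((hms.sub_const 1).pow 2)).congr_deriv ?_
  push_cast; ring

theorem energy_le_dissipation (h : IsForwardForwardSolution ε v m) (ht : 0 < t)
    (hv : ∫ x in (0:ℝ)..1, v x t = 0) (hm : ∫ x in (0:ℝ)..1, m x t = 1) :
    energy v m t ≤ dissipation v m t := by
  have hvc := h.continuousOn_v.continuous_slice ht.le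
  have hmc := h.continuousOn_m.continuous_slice ht.le
  obtain ⟨hvxc, hmxc, -, -⟩ := h.continuous_partial_slices ht
  have hpv := intervalIntegral_sq_le_intervalIntegral_sq_deriv
    (fun x => (hasDerivAt_partials_of_contDiffOn h.contDiffOn_v ht).1) hvxc hv
  have hpm := intervalIntegral_sq_le_intervalIntegral_sq_deriv (f := fun x => m x t - 1)
    (fun x => (hasDerivAt_partials_of_contDiffOn h.contDiffOn_m ht).1.sub_const 1) hmxc
    (by simp [intervalIntegral.integral_sub (hmc.intervalIntegrable 0 1) intervalIntegrable_const,
      hm])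
  rw [energy, dissipation,
    intervalIntegral.integral_add (f := fun x => v x t ^ 2) (g := fun x => (m x t - 1) ^ 2)
      ((hvc.pow 2).intervalIntegrable _ _)
      (((hmc.sub continuous_const).pow 2).intervalIntegrable _ _),
    intervalIntegral.integral_add (f := fun x => partialX v x t ^ 2)
      (g := fun x => partialX m x t ^ 2)
      ((hvxc.pow 2).intervalIntegrable _ _) ((hmxc.pow 2).intervalIntegrable _ _)]
  exact add_le_add hpv hpm

theorem tendsto_energy_atTop (h : IsForwardForwardSolution ε v m) (hε : 0 < ε)
    (hv : ∫ x in (0:ℝ)..1, v x 0 = 0) (hm : ∫ x in (0:ℝ)..1, m x 0 = 1) :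
    Tendsto (energy v m) atTop (nhds 0) := by
  have hdecay : ∀ t ≥ 1, energy v m t ≤ energy v m 1 * Real.exp (-(2 * ε) * (t - 1)) :=
    fun t ht => le_mul_exp_of_hasDerivAt_le_neg_mul
      (fun s hs => h.hasDerivAt_energy (by linarith))
      (fun s hs => mul_le_mul_of_nonpos_left
        (h.energy_le_dissipation (by linarith) ((h.integral_v_eq (by linarith)).trans hv)
          ((h.integral_m_eq (by linarith)).trans hm)) (by linarith)) ht
  have hexp : Tendsto (fun t => energy v m 1 * Real.exp (-(2 * ε) * (t - 1))) atTop (nhds 0) := by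
    have hlin : Tendsto (fun t : ℝ => -(2 * ε) * (t - 1)) atTop atBot :=
      (tendsto_atTop_add_const_right atTop (-1) tendsto_id).const_mul_atTop_of_neg (by linarith)
    simpa using (Real.tendsto_exp_atBot.comp hlin).const_mul (energy v m 1)
  refine tendsto_of_tendsto_of_tendsto_of_le_of_le' tendsto_const_nhds hexp
    (Eventually.of_forall fun t => ?_) (eventually_ge_atTop 1 |>.mono hdecay)
  exact intervalIntegral.integral_nonneg zero_le_one fun x _ => by positivity

theorem sq_integral_abs_v_le_energy (h : IsForwardForwardSolution ε v m) (ht : 0 ≤ t) :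
    (∫ x in (0:ℝ)..1, |v x t|) ^ 2 ≤ energy v m t := by
  have hvc := h.continuousOn_v.continuous_slice ht
  have hmc := h.continuousOn_m.continuous_slice ht
  refine (sq_intervalIntegral_abs_le_intervalIntegral_sq hvc.continuousOn).trans ?_
  refine intervalIntegral.integral_mono_on zero_le_one ((hvc.pow 2).intervalIntegrable _ _)
    (((hvc.pow 2).add ((hmc.sub continuous_const).pow 2)).intervalIntegrable _ _) fun x _ => ?_
  exact le_add_of_nonneg_right (sq_nonneg _)

theorem sq_integral_abs_m_sub_one_le_energy (h : IsForwardForwardSolution ε v m) (ht : 0 ≤ t) :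
    (∫ x in (0:ℝ)..1, |m x t - 1|) ^ 2 ≤ energy v m t := by
  have hvc := h.continuousOn_v.continuous_slice ht
  have hmc := h.continuousOn_m.continuous_slice ht
  refine (sq_intervalIntegral_abs_le_intervalIntegral_sq
    (g := fun x => m x t - 1) (hmc.sub continuous_const).continuousOn).trans ?_
  refine intervalIntegral.integral_mono_on zero_le_one
    (((hmc.sub continuous_const).pow 2).intervalIntegrable _ _)
    (((hvc.pow 2).add ((hmc.sub continuous_const).pow 2)).intervalIntegrable _ _) fun x _ => ?_
  exact le_add_of_nonneg_left (sq_nonneg _)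

end IsForwardForwardSolution

theorem parabolic_forward_forward_long_time_convergence_general
    (ε : ℝ) (hε : 0 < ε) (v m : ℝ → ℝ → ℝ)
    (hper_v : ∀ x t : ℝ, v (x + 1) t = v x t)
    (hper_m : ∀ x t : ℝ, m (x + 1) t = m x t)
    (hcont_v : ContinuousOn (fun p : ℝ × ℝ => v p.1 p.2) (Set.univ ×ˢ Set.Ici 0))
    (hcont_m : ContinuousOn (fun p : ℝ × ℝ => m p.1 p.2) (Set.univ ×ˢ Set.Ici 0))
    (hsm_v : ContDiffOn ℝ 2 (fun p : ℝ × ℝ => v p.1 p.2) (Set.univ ×ˢ Set.Ioi 0))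
    (hsm_m : ContDiffOn ℝ 2 (fun p : ℝ × ℝ => m p.1 p.2) (Set.univ ×ˢ Set.Ioi 0))
    (heq1 : ∀ x t : ℝ, 0 < t →
      deriv (fun s => v x s) t +
          deriv (fun y => (v y t) ^ 2 / 2 - (m y t) ^ 2 / 2) x =
        ε * deriv (fun y => deriv (fun z => v z t) y) x)
    (heq2 : ∀ x t : ℝ, 0 < t →
      deriv (fun s => m x s) t - deriv (fun y => m y t * v y t) x =
        ε * deriv (fun y => deriv (fun z => m z t) y) x)
    (hinit_v : ∫ x in (0:ℝ)..1, v x 0 = 0)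
    (hinit_m : ∫ x in (0:ℝ)..1, m x 0 = 1) :
    Tendsto (fun t : ℝ => ∫ x in (0:ℝ)..1, |v x t|) atTop (nhds 0) ∧
    Tendsto (fun t : ℝ => ∫ x in (0:ℝ)..1, |m x t - 1|) atTop (nhds 0) := by
  have h : IsForwardForwardSolution ε v m :=
    ⟨hper_v, hper_m, hcont_v, hcont_m, hsm_v, hsm_m, heq1, heq2⟩
  have hW := h.tendsto_energy_atTop hε hinit_v hinit_m
  have hnonneg : ∀ (f : ℝ → ℝ → ℝ) t, 0 ≤ ∫ x in (0:ℝ)..1, |f x t| := fun f t =>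
    intervalIntegral.integral_nonneg zero_le_one fun x _ => abs_nonneg _
  exact ⟨tendsto_zero_of_sq_le (.of_forall (hnonneg v))
      ((eventually_ge_atTop 0).mono fun t => h.sq_integral_abs_v_le_energy) hW,
    tendsto_zero_of_sq_le (.of_forall (hnonneg (fun x t => m x t - 1)))
      ((eventually_ge_atTop 0).mono fun t => h.sq_integral_abs_m_sub_one_le_energy) hW⟩

/-- Long-time convergence of the parabolic forward-forward MFG in
conservation-law form on the circle: if `v, m` are 1-periodic in space, continuous on
`ℝ × [0,∞)`, C² on `ℝ × (0,∞)`, `m > 0`, solve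
`v_t + (v²/2 − m²/2)_x = ε v_xx`, `m_t − (mv)_x = ε m_xx` on `ℝ × (0,∞)` and satisfy
`∫₀¹ v(x,0) dx = 0`, `∫₀¹ m(x,0) dx = 1`, then
`∫₀¹ |v(·,t)| → 0` and `∫₀¹ |m(·,t) − 1| → 0` as `t → ∞`. -/
theorem parabolic_forward_forward_long_time_convergence
    (ε : ℝ) (hε : 0 < ε) (v m : ℝ → ℝ → ℝ)
    (hper_v : ∀ x t : ℝ, v (x + 1) t = v x t)
    (hper_m : ∀ x t : ℝ, m (x + 1) t = m x t)
    (hcont_v : ContinuousOn (fun p : ℝ × ℝ => v p.1 p.2) (Set.univ ×ˢ Set.Ici 0))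
    (hcont_m : ContinuousOn (fun p : ℝ × ℝ => m p.1 p.2) (Set.univ ×ˢ Set.Ici 0))
    (hsm_v : ContDiffOn ℝ 2 (fun p : ℝ × ℝ => v p.1 p.2) (Set.univ ×ˢ Set.Ioi 0))
    (hsm_m : ContDiffOn ℝ 2 (fun p : ℝ × ℝ => m p.1 p.2) (Set.univ ×ˢ Set.Ioi 0))
    (hmpos : ∀ x t : ℝ, 0 ≤ t → 0 < m x t)
    (heq1 : ∀ x t : ℝ, 0 < t →
      deriv (fun s => v x s) t +
          deriv (fun y => (v y t) ^ 2 / 2 - (m y t) ^ 2 / 2) x =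
        ε * deriv (fun y => deriv (fun z => v z t) y) x)
    (heq2 : ∀ x t : ℝ, 0 < t →
      deriv (fun s => m x s) t - deriv (fun y => m y t * v y t) x =
        ε * deriv (fun y => deriv (fun z => m z t) y) x)
    (hinit_v : ∫ x in (0:ℝ)..1, v x 0 = 0)
    (hinit_m : ∫ x in (0:ℝ)..1, m x 0 = 1) :
    Tendsto (fun t : ℝ => ∫ x in (0:ℝ)..1, |v x t|) atTop (nhds 0) ∧
    Tendsto (fun t : ℝ => ∫ x in (0:ℝ)..1, |m x t - 1|) atTop (nhds 0) :=
  parabolic_forward_forward_long_time_convergence_general ε hε v m hper_v hper_m hcont_v hcont_m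
    hsm_v hsm_m heq1 heq2 hinit_v hinit_m
end
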